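/- Let T be a closed linear relation from a Hilbert space ℌ to a Hilbert space 𝔎. Then the product T*T is a nonnegative selfadjoint relation in ℌ, and T*T = T*Tₛ = (Tₛ)*Tₛ. In particular, ker(T*T) = ker T = ker Tₛ and mul(T*T) = mul T* = mul((Tₛ)*). -/

import Mathlib

open scoped ComplexOrder

set_option synthInstance.maxHeartbeats 1000000
set_option maxHeartbeats 1000000

noncomputable section

variable {E F G : Type*}

section Basic
variable [AddCommGroup E] [Module ℂ E] [AddCommGroup F] [Module ℂ F]
  [AddCommGroup G] [Module ℂ G]

/-- The domain of a linear relation. -/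
def relDom (R : Submodule ℂ (E × F)) : Set E := Prod.fst '' (R : Set (E × F))

/-- The range of a linear relation. -/
def relRan (R : Submodule ℂ (E × F)) : Set F := Prod.snd '' (R : Set (E × F))

/-- The kernel of a linear relation. -/
def relKer (R : Submodule ℂ (E × F)) : Submodule ℂ E where
  carrier := {f | (f, (0 : F)) ∈ R}
  add_mem' := fun ha hb => by simpa using R.add_mem ha hb
  zero_mem' := by exact R.zero_mem
  smul_mem' := fun c _ ha => by simpa using R.smul_mem c ha

/-- The multivalued part of a linear relation. -/
def relMul (R : Submodule ℂ (E × F)) : Submodule ℂ F where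
  carrier := {g | ((0 : E), g) ∈ R}
  add_mem' := fun ha hb => by simpa using R.add_mem ha hb
  zero_mem' := by exact R.zero_mem
  smul_mem' := fun c _ ha => by simpa using R.smul_mem c ha

/-- The product (composition) `S R` of two linear relations. -/
def relComp (S : Submodule ℂ (F × G)) (R : Submodule ℂ (E × F)) :
    Submodule ℂ (E × G) where
  carrier := {p | ∃ φ : F, (p.1, φ) ∈ R ∧ (φ, p.2) ∈ S}
  add_mem' := by
    rintro p q ⟨φ, h1, h2⟩ ⟨ψ, h3, h4⟩
    exact ⟨φ + ψ, by simpa using R.add_mem h1 h3, by simpa using S.add_mem h2 h4⟩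
  zero_mem' := ⟨0, R.zero_mem, S.zero_mem⟩
  smul_mem' := by
    rintro c p ⟨φ, h1, h2⟩
    exact ⟨c • φ, by simpa using R.smul_mem c h1, by simpa using S.smul_mem c h2⟩

/-- The inverse of a linear relation. -/
def relInv (R : Submodule ℂ (E × F)) : Submodule ℂ (F × E) where
  carrier := {p | (p.2, p.1) ∈ R}
  add_mem' := fun ha hb => by simpa using R.add_mem ha hb
  zero_mem' := by exact R.zero_mem
  smul_mem' := fun c _ ha => by simpa using R.smul_mem c ha

/-- The scalar multiple `c H = {{f, c f'} : {f, f'} ∈ H}` of a linear relation. -/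
def relSmul (c : ℝ) (R : Submodule ℂ (E × F)) : Submodule ℂ (E × F) where
  carrier := {p | ∃ f', (p.1, f') ∈ R ∧ p.2 = (c : ℂ) • f'}
  add_mem' := by
    rintro p q ⟨f, h1, h2⟩ ⟨g, h3, h4⟩
    refine ⟨f + g, by simpa using R.add_mem h1 h3, ?_⟩
    simp [h2, h4, smul_add]
  zero_mem' := ⟨0, R.zero_mem, by simp⟩
  smul_mem' := by
    rintro a p ⟨f, h1, h2⟩
    refine ⟨a • f, by simpa using R.smul_mem a h1, ?_⟩
    rw [Prod.smul_snd, h2, smul_comm]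

/-- The relation `H + x = {{f, f' + x f} : {f, f'} ∈ H}`. -/
def relAddScalar (R : Submodule ℂ (E × E)) (x : ℝ) : Submodule ℂ (E × E) where
  carrier := {p | ∃ f', (p.1, f') ∈ R ∧ p.2 = f' + (x : ℂ) • p.1}
  add_mem' := by
    rintro p q ⟨f, h1, h2⟩ ⟨g, h3, h4⟩
    refine ⟨f + g, by simpa using R.add_mem h1 h3, ?_⟩
    simp only [Prod.fst_add, Prod.snd_add, h2, h4, smul_add]
    abel
  zero_mem' := ⟨0, R.zero_mem, by simp⟩
  smul_mem' := by
    rintro a p ⟨f, h1, h2⟩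
    refine ⟨a • f, by simpa using R.smul_mem a h1, ?_⟩
    rw [Prod.smul_snd, Prod.smul_fst, h2, smul_add, smul_comm]

end Basic

section Hilbert

variable [NormedAddCommGroup E] [InnerProductSpace ℂ E]
  [NormedAddCommGroup F] [InnerProductSpace ℂ F]
  [NormedAddCommGroup G] [InnerProductSpace ℂ G]

/-- The graph of a bounded everywhere defined operator, as a linear relation. -/
def graphRel (W : E →L[ℂ] F) : Submodule ℂ (E × F) :=
  LinearMap.graph (W : E →ₗ[ℂ] F)

/-- The adjoint of a linear relation:
`H* = {{k, k'} : ⟨f', k⟩ = ⟨f, k'⟩ for all {f, f'} ∈ H}`. -/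
def relAdj (R : Submodule ℂ (E × F)) : Submodule ℂ (F × E) where
  carrier := {q | ∀ p ∈ R, (inner ℂ p.2 q.1 : ℂ) = inner ℂ p.1 q.2}
  add_mem' := by
    intro a b ha hb p hp
    simp only [Prod.fst_add, Prod.snd_add, inner_add_right]
    rw [ha p hp, hb p hp]
  zero_mem' := by intro p hp; simp
  smul_mem' := by
    intro c q hq p hp
    simp only [Prod.smul_fst, Prod.smul_snd, inner_smul_right]
    rw [hq p hp]

/-- A linear relation in a Hilbert space is nonnegative if `⟨h', h⟩ ≥ 0`
for all `{h, h'}` in the relation. -/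
def relNonneg (R : Submodule ℂ (E × E)) : Prop :=
  ∀ p ∈ R, 0 ≤ (inner ℂ p.2 p.1 : ℂ)

/-- A linear relation in a Hilbert space is selfadjoint if `H = H*`. -/
def relSelfAdj (R : Submodule ℂ (E × E)) : Prop := relAdj R = R

/-- The operator part `Hₛ = {{f, P f'} : {f, f'} ∈ H}` of a linear relation,
where `P` is the orthogonal projection onto `(mul H)ᗮ`. -/
def opPart [CompleteSpace F] (R : Submodule ℂ (E × F)) : Submodule ℂ (E × F) where
  carrier := {p | ∃ f' : F, (p.1, f') ∈ R ∧
      p.2 = (Submodule.orthogonalProjectionOnto (relMul R)ᗮ f' : F)}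
  add_mem' := by
    rintro p q ⟨f, h1, h2⟩ ⟨g, h3, h4⟩
    refine ⟨f + g, by simpa using R.add_mem h1 h3, ?_⟩
    simp [h2, h4]
  zero_mem' := ⟨0, R.zero_mem, by simp⟩
  smul_mem' := by
    rintro c p ⟨f, h1, h2⟩
    refine ⟨c • f, by simpa using R.smul_mem c h1, ?_⟩
    simp [h2]

/-- The ordering of nonnegative selfadjoint relations: `H₁ ≤ H₂` iff, with `Kᵢ`
the (unique) nonnegative selfadjoint square root of `Hᵢ`, one has
`dom K₂ ⊆ dom K₁` and `‖(K₁)ₛ h‖ ≤ ‖(K₂)ₛ h‖` for all `h ∈ dom K₂`. -/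
def RelLE [CompleteSpace E] (H₁ H₂ : Submodule ℂ (E × E)) : Prop :=
  ∃ K₁ K₂ : Submodule ℂ (E × E),
    relNonneg K₁ ∧ relSelfAdj K₁ ∧ relComp K₁ K₁ = H₁ ∧
    relNonneg K₂ ∧ relSelfAdj K₂ ∧ relComp K₂ K₂ = H₂ ∧
    relDom K₂ ⊆ relDom K₁ ∧
    ∀ h k₁ k₂, (h, k₁) ∈ opPart K₁ → (h, k₂) ∈ opPart K₂ → ‖k₁‖ ≤ ‖k₂‖

end Hilbert

/-
Both `T*T ⊆ (T*T)*` and `⟨f', f⟩ = ‖φ‖²` for `{f, φ} ∈ T`, `{φ, f'} ∈ T*` come straight from the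
definition of the adjoint. Selfadjointness then follows from the symmetric-operator argument once
`I + T*T` is surjective, which is the orthogonal decomposition `(h, 0) = (y, y') + (z, -y')` of
`ℌ × 𝔎` along `T ⊕ Tᗮ`: here `{y, y'} ∈ T` and `{y', z} ∈ T*`. Since `T` is closed, `mul T` is
closed, so `f' - P f' ∈ mul T` and `Tₛ ⊆ T`; as `ran T* ⊥ mul T`, the middle element `φ` of a
product `T*T` already lies in `ran P`, which gives `T*T = T*Tₛ`, and `T* = (Tₛ)* ∩ ((mul T)ᗮ × ℌ)`
gives `T*T = (Tₛ)*Tₛ`.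
-/

section Relation

variable [AddCommGroup E] [Module ℂ E] [AddCommGroup F] [Module ℂ F]
  [AddCommGroup G] [Module ℂ G]

theorem relComp_mono {S S' : Submodule ℂ (F × G)} {R R' : Submodule ℂ (E × F)}
    (hS : S ≤ S') (hR : R ≤ R') : relComp S R ≤ relComp S' R' :=
  fun _ ⟨φ, h₁, h₂⟩ => ⟨φ, hR h₁, hS h₂⟩

end Relation

section Hilbert

variable {H K : Type*} [NormedAddCommGroup H] [InnerProductSpace ℂ H]
  [NormedAddCommGroup K] [InnerProductSpace ℂ K]

open Submodule

theorem relAdj_anti {R R' : Submodule ℂ (H × K)} (h : R ≤ R') : relAdj R' ≤ relAdj R :=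
  fun _ hq p hp => hq p (h hp)

theorem inner_eq_inner_of_mem_relAdj {T : Submodule ℂ (H × K)} {φ : K} {f' g : H} {ψ : K}
    (hadj : (φ, f') ∈ relAdj T) (hT : (g, ψ) ∈ T) :
    (inner ℂ f' g : ℂ) = inner ℂ φ ψ := by
  rw [← inner_conj_symm, ← hadj (g, ψ) hT, inner_conj_symm]

theorem fst_mem_orthogonal_relMul_of_mem_relAdj {T : Submodule ℂ (H × K)} {k : K} {k' : H}
    (h : (k, k') ∈ relAdj T) : k ∈ (relMul T)ᗮ := by
  rw [mem_orthogonal]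
  intro u hu
  simpa using h (0, u) hu

theorem isClosed_relMul {T : Submodule ℂ (H × K)} (hT : IsClosed (T : Set (H × K))) :
    IsClosed (relMul T : Set K) :=
  hT.preimage (continuous_const.prodMk continuous_id)

section OperatorPart

variable [CompleteSpace K] {T : Submodule ℂ (H × K)}

theorem mem_opPart {p : H × K} :
    p ∈ opPart T ↔ ∃ f', (p.1, f') ∈ T ∧ p.2 = (relMul T)ᗮ.starProjection f' :=
  Iff.rfl

theorem snd_mem_orthogonal_of_mem_opPart {f : H} {ψ : K} (h : (f, ψ) ∈ opPart T) :
    ψ ∈ (relMul T)ᗮ := by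
  obtain ⟨φ, -, rfl⟩ := mem_opPart.1 h
  exact starProjection_apply_mem _ φ

theorem mem_opPart_of_mem_orthogonal {f : H} {φ : K} (h : (f, φ) ∈ T)
    (hφ : φ ∈ (relMul T)ᗮ) : (f, φ) ∈ opPart T :=
  ⟨φ, h, (starProjection_eq_self_iff.2 hφ).symm⟩

theorem opPart_le (hT : IsClosed (T : Set (H × K))) : opPart T ≤ T := by
  rintro ⟨f, _⟩ ⟨f', hf', rfl⟩
  have : CompleteSpace (relMul T) := (isClosed_relMul hT).completeSpace_coe
  have hmul : f' - (relMul T)ᗮ.starProjection f' ∈ relMul T := by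
    simpa only [orthogonal_orthogonal] using sub_starProjection_mem_orthogonal (K := (relMul T)ᗮ) f'
  simpa using T.sub_mem hf' hmul

theorem mem_relAdj_iff_mem_relAdj_opPart {k : K} {k' : H} :
    (k, k') ∈ relAdj T ↔ k ∈ (relMul T)ᗮ ∧ (k, k') ∈ relAdj (opPart T) := by
  refine ⟨fun h => ⟨fst_mem_orthogonal_relMul_of_mem_relAdj h, ?_⟩, fun ⟨hk, h⟩ => ?_⟩
  · rintro ⟨x, _⟩ ⟨f', hf', rfl⟩
    change inner ℂ ((relMul T)ᗮ.starProjection f') k = inner ℂ x k'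
    rw [inner_starProjection_left_eq_right, starProjection_eq_self_iff.2
      (fst_mem_orthogonal_relMul_of_mem_relAdj h)]
    exact h (x, f') hf'
  · rintro ⟨a, b⟩ hab
    have := h (a, _) (mem_opPart.2 ⟨b, hab, rfl⟩)
    rwa [inner_starProjection_left_eq_right, starProjection_eq_self_iff.2 hk] at this

theorem relKer_opPart (hT : IsClosed (T : Set (H × K))) : relKer (opPart T) = relKer T :=
  le_antisymm (fun _ h => opPart_le hT h) fun _ h => mem_opPart_of_mem_orthogonal h (zero_mem _)

theorem relMul_relAdj_opPart : relMul (relAdj (opPart T)) = relMul (relAdj T) := by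
  ext g
  exact (mem_relAdj_iff_mem_relAdj_opPart.trans (and_iff_right (zero_mem _))).symm

theorem relComp_relAdj_opPart (hT : IsClosed (T : Set (H × K))) :
    relComp (relAdj T) (opPart T) = relComp (relAdj T) T := by
  refine le_antisymm (relComp_mono le_rfl (opPart_le hT)) ?_
  rintro ⟨f, f'⟩ ⟨φ, hφ, hadj⟩
  exact ⟨φ, mem_opPart_of_mem_orthogonal hφ (fst_mem_orthogonal_relMul_of_mem_relAdj hadj), hadj⟩

theorem relComp_relAdj_opPart_opPart (hT : IsClosed (T : Set (H × K))) :
    relComp (relAdj (opPart T)) (opPart T) = relComp (relAdj T) T := by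
  refine le_antisymm ?_ ?_
  · rintro ⟨f, f'⟩ ⟨ψ, hψ, hadj⟩
    exact ⟨ψ, opPart_le hT hψ, mem_relAdj_iff_mem_relAdj_opPart.2
      ⟨snd_mem_orthogonal_of_mem_opPart hψ, hadj⟩⟩
  · rw [← relComp_relAdj_opPart hT]
    exact relComp_mono (relAdj_anti (opPart_le hT)) le_rfl

end OperatorPart

section AdjointProduct

variable {T : Submodule ℂ (H × K)}

theorem relComp_relAdj_le_relAdj : relComp (relAdj T) T ≤ relAdj (relComp (relAdj T) T) := by
  rintro ⟨g, g'⟩ ⟨ψ, hψ, hadj'⟩ ⟨f, f'⟩ ⟨φ, hφ, hadj⟩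
  rw [inner_eq_inner_of_mem_relAdj hadj hψ, ← inner_conj_symm, ← inner_conj_symm f,
    inner_eq_inner_of_mem_relAdj hadj' hφ]

theorem relNonneg_relComp_relAdj : relNonneg (relComp (relAdj T) T) := by
  rintro ⟨f, f'⟩ ⟨φ, hφ, hadj⟩
  rw [inner_eq_inner_of_mem_relAdj hadj hφ]
  exact CStarModule.inner_self_nonneg

theorem relKer_relComp_relAdj : relKer (relComp (relAdj T) T) = relKer T := by
  refine le_antisymm ?_ fun f hf => ⟨0, hf, zero_mem _⟩
  rintro f ⟨φ, hφ, hadj⟩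
  have hφ₀ := inner_eq_inner_of_mem_relAdj hadj hφ
  rw [inner_zero_left, eq_comm, inner_self_eq_zero] at hφ₀
  rwa [hφ₀] at hφ

theorem relMul_relComp_relAdj : relMul (relComp (relAdj T) T) = relMul (relAdj T) := by
  refine le_antisymm ?_ fun g hg => ⟨0, zero_mem _, hg⟩
  rintro g ⟨φ, hφ, hadj⟩
  have hφ₀ := inner_eq_inner_of_mem_relAdj hadj hφ
  rw [inner_zero_right, eq_comm, inner_self_eq_zero] at hφ₀
  rwa [hφ₀] at hadj

end AdjointProduct

theorem relAdj_le_of_le_relAdj {S : Submodule ℂ (H × H)} (hsymm : S ≤ relAdj S)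
    (hsurj : ∀ h, ∃ p ∈ S, p.1 + p.2 = h) : relAdj S ≤ S := by
  rintro ⟨g, g'⟩ hg
  obtain ⟨⟨f, f'⟩, hf, hsum⟩ := hsurj (g + g')
  have hdiff : (g - f, g' - f') ∈ relAdj S := sub_mem hg (hsymm hf)
  have hzero : (g - f) + (g' - f') = 0 := by
    rw [sub_add_sub_comm, ← hsum, sub_self]
  obtain ⟨⟨w, w'⟩, hw, hwsum⟩ := hsurj (g - f)
  have hself : (inner ℂ (g - f) (g - f) : ℂ) = 0 :=
    calc (inner ℂ (g - f) (g - f) : ℂ) = inner ℂ w (g - f) + inner ℂ w' (g - f) := by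
          rw [← hwsum, inner_add_left]
      _ = inner ℂ w ((g - f) + (g' - f')) := by
          rw [hdiff (w, w') hw, inner_add_right]
      _ = 0 := by rw [hzero, inner_zero_right]
  obtain rfl : g = f := sub_eq_zero.1 (inner_self_eq_zero.1 hself)
  obtain rfl : f' = g' := add_left_cancel hsum
  exact hf

theorem exists_mem_relComp_relAdj_add_eq [CompleteSpace H] [CompleteSpace K]
    {T : Submodule ℂ (H × K)} (hT : IsClosed (T : Set (H × K))) (h : H) :
    ∃ p ∈ relComp (relAdj T) T, p.1 + p.2 = h := by
  let e := WithLp.prodContinuousLinearEquiv 2 ℂ H K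
  let T₂ : Submodule ℂ (WithLp 2 (H × K)) := T.comap (e : WithLp 2 (H × K) →ₗ[ℂ] H × K)
  have : CompleteSpace T₂ := (hT.preimage e.continuous).completeSpace_coe
  obtain ⟨y, hy, z, hz, hsum⟩ := T₂.exists_add_mem_mem_orthogonal (WithLp.toLp 2 (h, 0))
  have hfst : y.fst + z.fst = h := by simpa using congrArg WithLp.fst hsum.symm
  have hsnd : z.snd = -y.snd :=
    eq_neg_of_add_eq_zero_right (by simpa using congrArg WithLp.snd hsum.symm)
  refine ⟨(y.fst, z.fst), ⟨y.snd, hy, ?_⟩, hfst⟩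
  rintro ⟨a, b⟩ hab
  have horth := inner_right_of_mem_orthogonal (show WithLp.toLp 2 (a, b) ∈ T₂ from hab) hz
  change inner ℂ a z.fst + inner ℂ b z.snd = 0 at horth
  rw [hsnd, inner_neg_right] at horth
  change inner ℂ b y.snd = inner ℂ a z.fst
  linear_combination -horth

theorem relSelfAdj_relComp_relAdj [CompleteSpace H] [CompleteSpace K]
    {T : Submodule ℂ (H × K)} (hT : IsClosed (T : Set (H × K))) :
    relSelfAdj (relComp (relAdj T) T) :=
  le_antisymm (relAdj_le_of_le_relAdj relComp_relAdj_le_relAdj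
    (exists_mem_relComp_relAdj_add_eq hT)) relComp_relAdj_le_relAdj

end Hilbert

theorem stmt_3 {𝓗 𝓚 : Type*}
    [NormedAddCommGroup 𝓗] [InnerProductSpace ℂ 𝓗] [CompleteSpace 𝓗]
    [NormedAddCommGroup 𝓚] [InnerProductSpace ℂ 𝓚] [CompleteSpace 𝓚]
    (T : Submodule ℂ (𝓗 × 𝓚)) (hT : IsClosed (T : Set (𝓗 × 𝓚))) :
    relNonneg (relComp (relAdj T) T) ∧
    relSelfAdj (relComp (relAdj T) T) ∧
    relComp (relAdj T) T = relComp (relAdj T) (opPart T) ∧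
    relComp (relAdj T) T = relComp (relAdj (opPart T)) (opPart T) ∧
    relKer (relComp (relAdj T) T) = relKer T ∧
    relKer T = relKer (opPart T) ∧
    relMul (relComp (relAdj T) T) = relMul (relAdj T) ∧
    relMul (relAdj T) = relMul (relAdj (opPart T)) :=
  ⟨relNonneg_relComp_relAdj, relSelfAdj_relComp_relAdj hT, (relComp_relAdj_opPart hT).symm,
    (relComp_relAdj_opPart_opPart hT).symm, relKer_relComp_relAdj, (relKer_opPart hT).symm,
    relMul_relComp_relAdj, relMul_relAdj_opPart.symm⟩
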